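/- arXiv:1306.1049 — 6 statements merged into one kernel-verified Lean document; each statement's English description precedes it below -/
import Mathlib

section
/- Let $K$ and $L$ be compact convex subsets of locally convex topological vector spaces and let $\varphi : K \to L$ be a continuous affine surjection. Then every extreme point of $L$ is the image under $\varphi$ of some extreme point of $K$. -/
theorem stmt_4_general {E F : Type*}
    [AddCommGroup E] [Module ℝ E] [TopologicalSpace E] [IsTopologicalAddGroup E]
    [ContinuousSMul ℝ E] [LocallyConvexSpace ℝ E] [T2Space E]
    [AddCommGroup F] [Module ℝ F] [TopologicalSpace F] [T2Space F]
    (K : Set E) (L : Set F) (hK : IsCompact K)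
    (φ : E →ᵃ[ℝ] F) (hφ : Continuous φ) (hsurj : φ '' K = L) :
    ∀ y ∈ Set.extremePoints ℝ L, ∃ x ∈ Set.extremePoints ℝ K, φ x = y := by
  subst hsurj
  exact surjOn_extremePoints_image ⟨φ, hφ⟩ hK

/-- Every extreme point of the image of a compact convex set under a continuous
affine surjection is the image of an extreme point. -/
theorem stmt_4 {E F : Type*}
    [AddCommGroup E] [Module ℝ E] [TopologicalSpace E] [IsTopologicalAddGroup E]
    [ContinuousSMul ℝ E] [LocallyConvexSpace ℝ E] [T2Space E]
    [AddCommGroup F] [Module ℝ F] [TopologicalSpace F] [IsTopologicalAddGroup F]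
    [ContinuousSMul ℝ F] [LocallyConvexSpace ℝ F] [T2Space F]
    (K : Set E) (L : Set F) (hK : IsCompact K) (hKc : Convex ℝ K)
    (hL : IsCompact L) (hLc : Convex ℝ L)
    (φ : E →ᵃ[ℝ] F) (hφ : Continuous φ) (hsurj : φ '' K = L) :
    ∀ y ∈ Set.extremePoints ℝ L, ∃ x ∈ Set.extremePoints ℝ K, φ x = y :=
  stmt_4_general K L hK φ hφ hsurj
end

section
/- Let $(C_n)$ be an increasing sequence of compact convex subsets of a metrizable compact convex subset $C$ of a locally convex topological vector space, and let $K$ be the closure of $\bigcup_n C_n$ (which is convex and compact). Then $\bigcup_n \mathrm{ext}(C_n)$ is dense in $\mathrm{ext}(K)$. -/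
/-!
By Krein–Milman each `Cₙ` is the closed convex hull of its extreme points, so `K` is the closed
convex hull of `t = closure (⋃ₙ ext Cₙ)`, a closed subset of `K`. Milman's converse of the
Krein–Milman theorem then puts every extreme point of `K` in `t`. For Milman's theorem: if an
extreme point `x` of `K` were outside `t`, cover the compact set `t` by finitely many closed
convex sets `Aᵢ ∌ x`; the convex hull `L` of the compact convex pieces `K ∩ Aᵢ` is compact, so it
contains `closure (convexHull t) ⊇ K ∋ x`, and `x`, extreme in `L`, must lie in one of the pieces.
-/

open Set Filter Topology

theorem convexJoin_eq_image {𝕜 E : Type*} [Ring 𝕜] [PartialOrder 𝕜] [AddRightMono 𝕜]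
    [AddCommGroup E] [Module 𝕜 E] (s t : Set E) :
    convexJoin 𝕜 s t =
      (fun p : 𝕜 × E × E => (1 - p.1) • p.2.1 + p.1 • p.2.2) '' (Icc 0 1 ×ˢ s ×ˢ t) := by
  ext z
  simp only [mem_convexJoin, segment_eq_image, mem_image, mem_prod, Prod.exists]
  constructor
  · rintro ⟨a, ha, b, hb, θ, hθ, rfl⟩
    exact ⟨θ, a, b, ⟨hθ, ha, hb⟩, rfl⟩
  · rintro ⟨θ, a, b, ⟨hθ, ha, hb⟩, rfl⟩
    exact ⟨a, ha, b, hb, θ, hθ, rfl⟩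

section Compactness

variable {E : Type*} [AddCommGroup E] [Module ℝ E] [TopologicalSpace E]
  [ContinuousAdd E] [ContinuousSMul ℝ E]

theorem IsCompact.convexJoin {s t : Set E} (hs : IsCompact s) (ht : IsCompact t) :
    IsCompact (convexJoin ℝ s t) := by
  rw [convexJoin_eq_image]
  exact (isCompact_Icc.prod (hs.prod ht)).image (by fun_prop)

theorem Finset.isCompact_convexHull_biUnion {ι : Type*} (I : Finset ι) {K : ι → Set E}
    (hK : ∀ i ∈ I, IsCompact (K i)) (hKc : ∀ i ∈ I, Convex ℝ (K i)) :
    IsCompact (convexHull ℝ (⋃ i ∈ I, K i)) := by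
  classical
  induction I using Finset.induction with
  | empty => simp
  | insert a I _ ih =>
    rw [Finset.set_biUnion_insert]
    have hKa := hK a (mem_insert_self a I)
    have hKac := hKc a (mem_insert_self a I)
    have hKI := ih (fun i hi => hK i (mem_insert_of_mem hi))
      (fun i hi => hKc i (mem_insert_of_mem hi))
    rcases (K a).eq_empty_or_nonempty with ha | ha
    · rwa [ha, Set.empty_union]
    rcases (⋃ i ∈ I, K i).eq_empty_or_nonempty with hI | hI
    · rwa [hI, Set.union_empty, hKac.convexHull_eq]
    · rw [convexHull_union ha hI, hKac.convexHull_eq]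
      exact hKa.convexJoin hKI

end Compactness

section Milman

variable {E : Type*} [AddCommGroup E] [Module ℝ E] [TopologicalSpace E]
  [IsTopologicalAddGroup E] [ContinuousSMul ℝ E] [LocallyConvexSpace ℝ E] [T2Space E]

theorem exists_isClosed_convex_mem_nhds_notMem {x y : E} (hxy : x ≠ y) :
    ∃ A ∈ 𝓝 y, IsClosed A ∧ Convex ℝ A ∧ x ∉ A := by
  obtain ⟨U, V, hU, hV, hUc, -, hyU, hxV, hUV⟩ :=
    exists_open_convex_of_notMem (𝕜 := ℝ) (x := y) (s := {x}) hxy.symm (convex_singleton x)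
      isClosed_singleton
  exact ⟨closure U, mem_of_superset (hU.mem_nhds hyU) subset_closure, isClosed_closure,
    hUc.closure, fun hx => (hUV.closure_left hV).notMem_of_mem_left hx (hxV rfl)⟩

/-- **Milman's theorem**, converse to the Krein–Milman theorem. -/
theorem extremePoints_subset_of_subset_closure_convexHull {s t : Set E} (hs : IsCompact s)
    (hsc : Convex ℝ s) (ht : IsClosed t) (hts : t ⊆ s) (hst : s ⊆ closure (convexHull ℝ t)) :
    s.extremePoints ℝ ⊆ t := by
  intro x hx
  by_contra hxt
  have hsep : ∀ y ∈ t, ∃ A ∈ 𝓝 y, IsClosed A ∧ Convex ℝ A ∧ x ∉ A := fun y hy =>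
    exists_isClosed_convex_mem_nhds_notMem fun hxy => hxt (hxy ▸ hy)
  choose! A hAy hAc hAconv hxA using hsep
  obtain ⟨I, hIt, htA⟩ := (hs.of_isClosed_subset ht hts).elim_nhds_subcover A hAy
  set L := convexHull ℝ (⋃ y ∈ I, s ∩ A y)
  have hL : IsCompact L := I.isCompact_convexHull_biUnion
    (fun y hy => hs.inter_right (hAc y (hIt y hy))) fun y hy => hsc.inter (hAconv y (hIt y hy))
  have hLs : L ⊆ s := convexHull_min (iUnion₂_subset fun _ _ => inter_subset_left) hsc
  have htL : t ⊆ L := fun z hz => by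
    obtain ⟨y, hyI, hzy⟩ := mem_iUnion₂.1 (htA hz)
    exact subset_convexHull ℝ _ (mem_iUnion₂.2 ⟨y, hyI, hts hz, hzy⟩)
  have hxL : x ∈ L :=
    closure_minimal (convexHull_min htL (convex_convexHull ℝ _)) hL.isClosed (hst hx.1)
  obtain ⟨y, hyI, -, hxy⟩ := mem_iUnion₂.1 <| extremePoints_convexHull_subset <|
    inter_extremePoints_subset_extremePoints_of_subset hLs ⟨hxL, hx⟩
  exact hxA y (hIt y hyI) hxy

end Milman

theorem stmt_6_general {E : Type*}
    [AddCommGroup E] [Module ℝ E] [TopologicalSpace E] [IsTopologicalAddGroup E]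
    [ContinuousSMul ℝ E] [LocallyConvexSpace ℝ E] [T2Space E]
    (C : Set E) (hC : IsCompact C)
    (Cn : ℕ → Set E) (hmono : Monotone Cn)
    (hsub : ∀ n, Cn n ⊆ C)
    (hcomp : ∀ n, IsCompact (Cn n)) (hconv : ∀ n, Convex ℝ (Cn n)) :
    Set.extremePoints ℝ (closure (⋃ n, Cn n)) ⊆
      closure (⋃ n, Set.extremePoints ℝ (Cn n)) := by
  have hK : IsCompact (closure (⋃ n, Cn n)) :=
    hC.of_isClosed_subset isClosed_closure (closure_minimal (iUnion_subset hsub) hC.isClosed)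
  have hKconv : Convex ℝ (closure (⋃ n, Cn n)) :=
    (hmono.directed_le.convex_iUnion hconv).closure
  have hext : closure (⋃ n, (Cn n).extremePoints ℝ) ⊆ closure (⋃ n, Cn n) :=
    closure_mono (iUnion_mono fun _ => extremePoints_subset)
  refine extremePoints_subset_of_subset_closure_convexHull hK hKconv isClosed_closure hext ?_
  refine closure_minimal (iUnion_subset fun n => ?_) isClosed_closure
  rw [← closure_convexHull_extremePoints (hcomp n) (hconv n)]
  exact closure_mono (convexHull_mono (subset_iUnion (fun m => (Cn m).extremePoints ℝ) n
    |>.trans subset_closure))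

/-- If `(Cₙ)` is an increasing sequence of compact convex subsets of a metrizable
compact convex set `C`, then `⋃ₙ ext(Cₙ)` is dense in the set of extreme points of
the closure `K` of `⋃ₙ Cₙ`. -/
theorem stmt_6 {E : Type*}
    [AddCommGroup E] [Module ℝ E] [TopologicalSpace E] [IsTopologicalAddGroup E]
    [ContinuousSMul ℝ E] [LocallyConvexSpace ℝ E] [T2Space E]
    [TopologicalSpace.MetrizableSpace E]
    (C : Set E) (hC : IsCompact C) (hCc : Convex ℝ C)
    (Cn : ℕ → Set E) (hmono : Monotone Cn)
    (hsub : ∀ n, Cn n ⊆ C)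
    (hcomp : ∀ n, IsCompact (Cn n)) (hconv : ∀ n, Convex ℝ (Cn n)) :
    Set.extremePoints ℝ (closure (⋃ n, Cn n)) ⊆
      closure (⋃ n, Set.extremePoints ℝ (Cn n)) :=
  stmt_6_general C hC Cn hmono hsub hcomp hconv
end

section
/- Let $S$ be a compact convex subset of a locally convex space, $s \in S$, and $\mathrm{cone}(S,s) = \mathrm{conv}((S \times \{0\}) \cup \{(s,1)\}) \subseteq S \times [0,1]$. Then the extreme points of $\mathrm{cone}(S,s)$ are exactly $(\mathrm{ext}(S) \times \{0\}) \cup \{(s,1)\}$. -/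
/-- The cone of `S` over `s`: the closed convex hull of `(S × {0}) ∪ {(s,1)}`
inside `E × ℝ`. -/
def coneSet {E : Type*} [AddCommGroup E] [Module ℝ E] [TopologicalSpace E]
    (S : Set E) (s : E) : Set (E × ℝ) :=
  closure (convexHull ℝ (((fun x => (x, (0:ℝ))) '' S) ∪ {(s, (1:ℝ))}))

/-! The cone is the compact set `{((1 - t) x + t s, t) | x ∈ S, t ∈ [0, 1]}`, so it equals the
convex hull of `S × {0} ∪ {(s, 1)}` and its extreme points lie in that set. The levels `t = 0`
and `t = 1`, where the last coordinate attains its minimum and maximum on the cone, are faces equal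
to `S × {0}` and `{(s, 1)}`, and the extreme points of a face are those of the cone lying in it. -/

open Set

section ExtremeFaces

variable {𝕜 E : Type*} [Field 𝕜] [LinearOrder 𝕜] [IsStrictOrderedRing 𝕜]
  [AddCommGroup E] [Module 𝕜 E] {A : Set E}

theorem isExtreme_setOf_apply_eq_of_forall_le (f : E →ₗ[𝕜] 𝕜) {c : 𝕜}
    (hf : ∀ x ∈ A, f x ≤ c) : IsExtreme 𝕜 A {x ∈ A | f x = c} := by
  refine ⟨sep_subset _ _, fun x₁ hx₁ x₂ hx₂ z ⟨_, hz⟩ ⟨a, b, ha, hb, hab, hz_eq⟩ ↦ ⟨hx₁, ?_⟩⟩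
  have hsum : a * f x₁ + b * f x₂ = c := by
    rw [← hz, ← hz_eq, map_add, map_smul, map_smul, smul_eq_mul, smul_eq_mul]
  refine le_antisymm (hf x₁ hx₁) (not_lt.1 fun hlt ↦ ?_)
  have h₁ := mul_lt_mul_of_pos_left hlt ha
  have h₂ := mul_le_mul_of_nonneg_left (hf x₂ hx₂) hb.le
  have hc : a * c + b * c = c := by rw [← add_mul, hab, one_mul]
  linarith

theorem isExtreme_setOf_apply_eq_of_forall_ge (f : E →ₗ[𝕜] 𝕜) {c : 𝕜}
    (hf : ∀ x ∈ A, c ≤ f x) : IsExtreme 𝕜 A {x ∈ A | f x = c} := by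
  simpa only [LinearMap.neg_apply, neg_inj] using
    isExtreme_setOf_apply_eq_of_forall_le (-f) fun x hx ↦ neg_le_neg (hf x hx)

end ExtremeFaces

theorem extremePoints_eq_union_of_isExtreme {𝕜 E : Type*} [Semiring 𝕜] [PartialOrder 𝕜]
    [AddCommMonoid E] [SMul 𝕜 E] {A B₁ B₂ : Set E} (h₁ : IsExtreme 𝕜 A B₁)
    (h₂ : IsExtreme 𝕜 A B₂) (h : A.extremePoints 𝕜 ⊆ B₁ ∪ B₂) :
    A.extremePoints 𝕜 = B₁.extremePoints 𝕜 ∪ B₂.extremePoints 𝕜 := by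
  rw [h₁.extremePoints_eq, h₂.extremePoints_eq, ← union_inter_distrib_right,
    inter_eq_right.2 h]

section Cone

variable {𝕜 E : Type*} [Field 𝕜] [LinearOrder 𝕜] [AddCommGroup E] [Module 𝕜 E]
  {S : Set E} {s : E}

def coneParam (s : E) (p : E × 𝕜) : E × 𝕜 := ((1 - p.2) • p.1 + p.2 • s, p.2)

theorem snd_mem_Icc_of_mem_image_coneParam {p : E × 𝕜}
    (hp : p ∈ coneParam s '' (S ×ˢ Icc 0 1)) : p.2 ∈ Icc 0 1 := by
  obtain ⟨q, hq, rfl⟩ := hp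
  exact hq.2

variable [IsStrictOrderedRing 𝕜]

theorem convexHull_prod_zero_union_singleton (hS : Convex 𝕜 S) (hS₀ : S.Nonempty) :
    convexHull 𝕜 (S ×ˢ ({0} : Set 𝕜) ∪ {(s, 1)}) = coneParam s '' (S ×ˢ Icc 0 1) := by
  rw [(hS.prod (convex_singleton 0)).convexHull_union (convex_singleton _)
    (hS₀.prod (singleton_nonempty 0)) (singleton_nonempty _), convexJoin_singleton_right]
  ext p
  simp only [mem_iUnion, segment_eq_image, mem_image, mem_prod, mem_singleton_iff, exists_prop]
  constructor
  · rintro ⟨⟨x, _⟩, ⟨hx, rfl⟩, t, ht, rfl⟩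
    exact ⟨(x, t), ⟨hx, ht⟩, by simp [coneParam]⟩
  · rintro ⟨⟨x, t⟩, ⟨hx, ht⟩, rfl⟩
    exact ⟨(x, 0), ⟨hx, rfl⟩, t, ht, by simp [coneParam]⟩

theorem image_coneParam_sep_snd_eq_zero :
    {p ∈ coneParam s '' (S ×ˢ Icc 0 1) | p.2 = 0} = S ×ˢ ({0} : Set 𝕜) := by
  ext ⟨x, t⟩
  constructor
  · rintro ⟨⟨⟨y, u⟩, ⟨hy, _⟩, hyu⟩, rfl : t = 0⟩
    simp only [coneParam, Prod.mk.injEq] at hyu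
    obtain ⟨rfl, rfl⟩ := hyu
    simpa using hy
  · rintro ⟨hx, rfl : t = 0⟩
    exact ⟨⟨(x, 0), ⟨hx, left_mem_Icc.2 zero_le_one⟩, by simp [coneParam]⟩, rfl⟩

theorem image_coneParam_sep_snd_eq_one (hS₀ : S.Nonempty) :
    {p ∈ coneParam s '' (S ×ˢ Icc (0 : 𝕜) 1) | p.2 = 1} = {(s, 1)} := by
  ext ⟨x, t⟩
  constructor
  · rintro ⟨⟨⟨y, u⟩, _, hyu⟩, rfl : t = 1⟩
    simp only [coneParam, Prod.mk.injEq] at hyu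
    obtain ⟨rfl, rfl⟩ := hyu
    simp
  · rintro ⟨rfl, rfl⟩
    obtain ⟨y, hy⟩ := hS₀
    exact ⟨⟨(y, 1), ⟨hy, right_mem_Icc.2 zero_le_one⟩, by simp [coneParam]⟩, rfl⟩

end Cone

theorem coneSet_eq_convexHull {E : Type*} [AddCommGroup E] [Module ℝ E] [TopologicalSpace E]
    [IsTopologicalAddGroup E] [ContinuousSMul ℝ E] [T2Space E] {S : Set E} (hS : IsCompact S)
    (hSc : Convex ℝ S) (hS₀ : S.Nonempty) (s : E) :
    coneSet S s = convexHull ℝ (S ×ˢ ({0} : Set ℝ) ∪ {(s, 1)}) := by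
  rw [coneSet, ← prod_singleton, convexHull_prod_zero_union_singleton hSc hS₀]
  exact ((hS.prod isCompact_Icc).image (by unfold coneParam; fun_prop)).isClosed.closure_eq

theorem stmt_8_general {E : Type*}
    [AddCommGroup E] [Module ℝ E] [TopologicalSpace E] [IsTopologicalAddGroup E]
    [ContinuousSMul ℝ E] [T2Space E]
    (S : Set E) (hS : IsCompact S) (hSc : Convex ℝ S) (s : E) (hs : s ∈ S) :
    Set.extremePoints ℝ (coneSet S s) =
      ((fun x => (x, (0:ℝ))) '' (Set.extremePoints ℝ S)) ∪ {(s, (1:ℝ))} := by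
  have hC := coneSet_eq_convexHull hS hSc ⟨s, hs⟩ s
  have hCparam := hC.trans (convexHull_prod_zero_union_singleton hSc ⟨s, hs⟩)
  have hbot : IsExtreme ℝ (coneSet S s) (S ×ˢ ({0} : Set ℝ)) := by
    rw [hCparam, ← image_coneParam_sep_snd_eq_zero]
    exact isExtreme_setOf_apply_eq_of_forall_ge (LinearMap.snd ℝ E ℝ) fun p hp ↦
      (snd_mem_Icc_of_mem_image_coneParam hp).1
  have htop : IsExtreme ℝ (coneSet S s) {(s, 1)} := by
    rw [hCparam, ← image_coneParam_sep_snd_eq_one ⟨s, hs⟩]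
    exact isExtreme_setOf_apply_eq_of_forall_le (LinearMap.snd ℝ E ℝ) fun p hp ↦
      (snd_mem_Icc_of_mem_image_coneParam hp).2
  rw [extremePoints_eq_union_of_isExtreme hbot htop (hC ▸ extremePoints_convexHull_subset),
    extremePoints_prod, extremePoints_singleton, extremePoints_singleton, prod_singleton]

/-- The extreme points of `cone(S, s)` are exactly `(ext S × {0}) ∪ {(s,1)}`. -/
theorem stmt_8 {E : Type*}
    [AddCommGroup E] [Module ℝ E] [TopologicalSpace E] [IsTopologicalAddGroup E]
    [ContinuousSMul ℝ E] [LocallyConvexSpace ℝ E] [T2Space E]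
    (S : Set E) (hS : IsCompact S) (hSc : Convex ℝ S) (s : E) (hs : s ∈ S) :
    Set.extremePoints ℝ (coneSet S s) =
      ((fun x => (x, (0:ℝ))) '' (Set.extremePoints ℝ S)) ∪ {(s, (1:ℝ))} :=
  stmt_8_general S hS hSc s hs
end

section
/- Let $S$ be a compact convex set and $s_1, s_2 \in S$. Then the iterated cones $\mathrm{cone}(\mathrm{cone}(S,s_1),s_2)$ and $\mathrm{cone}(\mathrm{cone}(S,s_2),s_1)$ are affinely homeomorphic. Explicitly, both are affinely homeomorphic to the closed convex hull of $(S \times \{(0,0)\}) \cup \{(s_1,0,1)\} \cup \{(s_2,1,0)\}$ in $S \times [0,1]^2$. -/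
/-- Two subsets of topological vector spaces are affinely homeomorphic. -/
def AffinelyHomeomorphic {E F : Type*}
    [AddCommGroup E] [Module ℝ E] [TopologicalSpace E]
    [AddCommGroup F] [Module ℝ F] [TopologicalSpace F]
    (A : Set E) (B : Set F) : Prop :=
  ∃ f : E → F, ∃ g : F → E,
    ContinuousOn f A ∧ ContinuousOn g B ∧ Set.BijOn f A B ∧ Set.InvOn g f A B ∧
    ∀ x ∈ A, ∀ y ∈ A, ∀ a b : ℝ, 0 ≤ a → 0 ≤ b → a + b = 1 →
      f (a • x + b • y) = a • f x + b • f y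

/-!
Flattening `cone(cone(S, a), b)` gives the closed convex hull of `S × {(0,0)}` and the two
apexes `((a,1),0)` and `((b,0),1)`: the inner closure and convex hull are absorbed by the outer
ones. Swapping the two cone coordinates is a linear homeomorphism that exchanges the roles of
`a` and `b`.
-/

section ClosedConvexHull

variable {𝕜 E F : Type*} [Field 𝕜] [PartialOrder 𝕜]
  [AddCommGroup E] [Module 𝕜 E] [TopologicalSpace E]
  [AddCommGroup F] [Module 𝕜 F] [TopologicalSpace F]

theorem ContinuousLinearEquiv.image_closure_convexHull (e : E ≃L[𝕜] F) (s : Set E) :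
    e '' closure (convexHull 𝕜 s) = closure (convexHull 𝕜 (e '' s)) := by
  rw [e.image_closure]
  exact congrArg closure ((e : E →ₗ[𝕜] F).image_convexHull s)

theorem closure_convexHull_image_closure_convexHull_union [IsTopologicalAddGroup F]
    [ContinuousConstSMul 𝕜 F] (f : E →L[𝕜] F) (s : Set E) (t : Set F) :
    closure (convexHull 𝕜 (f '' closure (convexHull 𝕜 s) ∪ t)) =
      closure (convexHull 𝕜 (f '' s ∪ t)) := by
  refine Set.Subset.antisymm ?_ ?_
  · refine closure_minimal (convexHull_min (Set.union_subset ?_ ?_)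
      (convex_convexHull 𝕜 _).closure) isClosed_closure
    · calc f '' closure (convexHull 𝕜 s)
          ⊆ closure (f '' convexHull 𝕜 s) := image_closure_subset_closure_image f.continuous
        _ = closure (convexHull 𝕜 (f '' s)) :=
          congrArg closure ((f : E →ₗ[𝕜] F).image_convexHull s)
        _ ⊆ closure (convexHull 𝕜 (f '' s ∪ t)) :=
          closure_mono (convexHull_mono Set.subset_union_left)
    · exact Set.subset_union_right.trans ((subset_convexHull 𝕜 _).trans subset_closure)
  · exact closure_mono (convexHull_mono (Set.union_subset_union_left t
      (Set.image_mono ((subset_convexHull 𝕜 s).trans subset_closure))))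

end ClosedConvexHull

section AffinelyHomeomorphic

variable {E F : Type*} [AddCommGroup E] [Module ℝ E] [TopologicalSpace E]
  [AddCommGroup F] [Module ℝ F] [TopologicalSpace F]

theorem ContinuousAffineEquiv.affinelyHomeomorphic_image (e : E ≃ᴬ[ℝ] F) (A : Set E) :
    AffinelyHomeomorphic A (e '' A) :=
  ⟨e, e.symm, e.continuous.continuousOn, e.symm.continuous.continuousOn,
    e.injective.injOn.bijOn_image,
    ⟨fun x _ => e.symm_apply_apply x, fun y _ => e.apply_symm_apply y⟩,
    fun _ _ _ _ _ _ _ _ hab => Convex.combo_affine_apply (f := e.toAffineEquiv.toAffineMap) hab⟩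

theorem AffinelyHomeomorphic.refl (A : Set E) : AffinelyHomeomorphic A A := by
  simpa using (ContinuousAffineEquiv.refl ℝ E).affinelyHomeomorphic_image A

end AffinelyHomeomorphic

def ContinuousLinearEquiv.prodRightComm (R M N P : Type*) [Semiring R]
    [AddCommMonoid M] [Module R M] [TopologicalSpace M]
    [AddCommMonoid N] [Module R N] [TopologicalSpace N]
    [AddCommMonoid P] [Module R P] [TopologicalSpace P] :
    ((M × N) × P) ≃L[R] ((M × P) × N) where
  toFun x := ((x.1.1, x.2), x.1.2)
  invFun x := ((x.1.1, x.2), x.1.2)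
  map_add' _ _ := rfl
  map_smul' _ _ := rfl
  left_inv _ := rfl
  right_inv _ := rfl
  continuous_toFun := by fun_prop
  continuous_invFun := by fun_prop

section Cone

variable {E : Type*} [AddCommGroup E] [Module ℝ E] [TopologicalSpace E]
  [IsTopologicalAddGroup E] [ContinuousConstSMul ℝ E]

theorem coneSet_coneSet (S : Set E) (a b : E) :
    coneSet (coneSet S a) (b, 0) = closure (convexHull ℝ
      (((fun x => ((x, (0:ℝ)), (0:ℝ))) '' S) ∪
        {((b, (0:ℝ)), (1:ℝ)), ((a, (1:ℝ)), (0:ℝ))})) := by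
  have h := closure_convexHull_image_closure_convexHull_union
    (ContinuousLinearMap.inl ℝ (E × ℝ) ℝ)
    (((fun x => (x, (0:ℝ))) '' S) ∪ {(a, 1)}) {((b, 0), 1)}
  rw [Set.image_union, Set.image_image, Set.image_singleton, Set.union_assoc,
    Set.singleton_union, Set.pair_comm] at h
  exact h

theorem image_prodRightComm_coneSet_coneSet (S : Set E) (a b : E) :
    ContinuousLinearEquiv.prodRightComm ℝ E ℝ ℝ '' coneSet (coneSet S a) (b, 0) =
      coneSet (coneSet S b) (a, 0) := by
  rw [coneSet_coneSet, coneSet_coneSet, ContinuousLinearEquiv.image_closure_convexHull,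
    Set.image_union, Set.image_image, Set.image_pair, Set.pair_comm]
  rfl

end Cone

theorem stmt_9_general {E : Type*}
    [AddCommGroup E] [Module ℝ E] [TopologicalSpace E] [IsTopologicalAddGroup E]
    [ContinuousSMul ℝ E]
    (S : Set E)
    (s₁ s₂ : E) :
    AffinelyHomeomorphic (coneSet (coneSet S s₁) (s₂, 0))
        (coneSet (coneSet S s₂) (s₁, 0)) ∧
    AffinelyHomeomorphic (coneSet (coneSet S s₁) (s₂, 0))
        (closure (convexHull ℝ
          (((fun x => ((x, (0:ℝ)), (0:ℝ))) '' S) ∪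
            {((s₁, (0:ℝ)), (1:ℝ)), ((s₂, (1:ℝ)), (0:ℝ))}))) ∧
    AffinelyHomeomorphic (coneSet (coneSet S s₂) (s₁, 0))
        (closure (convexHull ℝ
          (((fun x => ((x, (0:ℝ)), (0:ℝ))) '' S) ∪
            {((s₁, (0:ℝ)), (1:ℝ)), ((s₂, (1:ℝ)), (0:ℝ))}))) := by
  have hswap := (ContinuousLinearEquiv.prodRightComm ℝ E ℝ ℝ).toContinuousAffineEquiv
    |>.affinelyHomeomorphic_image (coneSet (coneSet S s₁) (s₂, 0))
  rw [ContinuousLinearEquiv.coe_toContinuousAffineEquiv,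
    image_prodRightComm_coneSet_coneSet] at hswap
  rw [← coneSet_coneSet]
  exact ⟨hswap, hswap, .refl _⟩

/-- The double cones `cone(cone(S,s₁),s₂)` and `cone(cone(S,s₂),s₁)` are affinely
homeomorphic; both are affinely homeomorphic to the closed convex hull of
`(S × {(0,0)}) ∪ {(s₁,0,1)} ∪ {(s₂,1,0)}` in `S × [0,1]²`. -/
theorem stmt_9 {E : Type*}
    [AddCommGroup E] [Module ℝ E] [TopologicalSpace E] [IsTopologicalAddGroup E]
    [ContinuousSMul ℝ E] [LocallyConvexSpace ℝ E] [T2Space E]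
    (S : Set E) (hS : IsCompact S) (hSc : Convex ℝ S)
    (s₁ s₂ : E) (hs₁ : s₁ ∈ S) (hs₂ : s₂ ∈ S) :
    AffinelyHomeomorphic (coneSet (coneSet S s₁) (s₂, 0))
        (coneSet (coneSet S s₂) (s₁, 0)) ∧
    AffinelyHomeomorphic (coneSet (coneSet S s₁) (s₂, 0))
        (closure (convexHull ℝ
          (((fun x => ((x, (0:ℝ)), (0:ℝ))) '' S) ∪
            {((s₁, (0:ℝ)), (1:ℝ)), ((s₂, (1:ℝ)), (0:ℝ))}))) ∧
    AffinelyHomeomorphic (coneSet (coneSet S s₂) (s₁, 0))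
        (closure (convexHull ℝ
          (((fun x => ((x, (0:ℝ)), (0:ℝ))) '' S) ∪
            {((s₁, (0:ℝ)), (1:ℝ)), ((s₂, (1:ℝ)), (0:ℝ))}))) :=
  stmt_9_general S s₁ s₂
end

section
/- Let $S$ be a compact convex set, $s_1 \in S$, and consider the double cone $T = \mathrm{cone}(\mathrm{cone}(S,s_1),s_2)$ for $s_2 \in S$, with projection $\pi : T \to \mathrm{cone}(S,s_1)$. Suppose $y \in \mathrm{cone}(S,s_1)$ satisfies $y = \alpha x + (1-\alpha)c(s_1)$ for some $x \in S$ and $0 < \alpha < 1$, where $c(s_1)$ is the cone point over $s_1$. Then for every $y' \in T$ with $\pi(y') = y$ there exists a unique $x' \in \mathrm{cone}(S,s_2) \subseteq T$ such that $y' = \alpha x' + (1-\alpha)c(s_1)$. -/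
open Set

theorem smul_add_smul_add_smul_eq_smul_add_smul {𝕜 F : Type*} [Field 𝕜] [AddCommGroup F]
    [Module 𝕜 F] {l b α : 𝕜} (hα : α ≠ 0) (h : l * (1 - b) = 1 - α) (u q v : F) :
    l • (b • u + (1 - b) • q) + (1 - l) • v =
      α • ((l * b / α) • u + (1 - l * b / α) • v) + (1 - α) • q := by
  have hμ : α * (l * b / α) = l * b := mul_div_cancel₀ _ hα
  simp only [smul_add, smul_smul, mul_sub, mul_one, hμ, h]
  linear_combination (norm := module) (-h) • v

theorem Convex.convexHull_union_singleton {𝕜 F : Type*} [Field 𝕜] [LinearOrder 𝕜]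
    [IsStrictOrderedRing 𝕜] [AddCommGroup F] [Module 𝕜 F] {A : Set F} (hA : Convex 𝕜 A)
    (hne : A.Nonempty) (p : F) :
    convexHull 𝕜 (A ∪ {p}) = (fun q : 𝕜 × F => q.1 • q.2 + (1 - q.1) • p) '' Icc 0 1 ×ˢ A := by
  rw [union_singleton, convexHull_insert hne, hA.convexHull_eq, convexJoin_singleton_left]
  ext z
  simp only [mem_iUnion, segment_eq_image, mem_image, mem_prod, Prod.exists, exists_prop]
  constructor
  · rintro ⟨a, ha, θ, hθ, rfl⟩
    exact ⟨θ, a, ⟨hθ, ha⟩, by module⟩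
  · rintro ⟨θ, a, ⟨hθ, ha⟩, rfl⟩
    exact ⟨a, ha, θ, hθ, by module⟩

section Cone

variable {E : Type*} [AddCommGroup E] [Module ℝ E] [TopologicalSpace E]

theorem apex_mem_coneSet (S : Set E) (s : E) : (s, 1) ∈ coneSet S s :=
  subset_closure (subset_convexHull ℝ _ (Or.inr rfl))

variable [IsTopologicalAddGroup E] [ContinuousSMul ℝ E]

theorem convex_coneSet (S : Set E) (s : E) : Convex ℝ (coneSet S s) :=
  (convex_convexHull ℝ _).closure

variable [T2Space E] {S : Set E}

theorem coneSet_eq_image (hS : IsCompact S) (hSc : Convex ℝ S) (hne : S.Nonempty) (s : E) :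
    coneSet S s = (fun q : ℝ × E × ℝ => q.1 • q.2 + (1 - q.1) • (s, 1)) ''
      Icc 0 1 ×ˢ ((fun x => (x, (0:ℝ))) '' S) := by
  have hbase : Convex ℝ ((fun x => (x, (0:ℝ))) '' S) := hSc.linear_image (LinearMap.inl ℝ E ℝ)
  rw [coneSet, hbase.convexHull_union_singleton (hne.image _)]
  exact ((isCompact_Icc.prod (hS.image (by fun_prop))).image (by fun_prop)).isClosed.closure_eq

theorem isCompact_coneSet (hS : IsCompact S) (hSc : Convex ℝ S) (hne : S.Nonempty) (s : E) :
    IsCompact (coneSet S s) := by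
  rw [coneSet_eq_image hS hSc hne]
  exact (isCompact_Icc.prod (hS.image (by fun_prop))).image (by fun_prop)

theorem exists_eq_of_mem_coneSet_coneSet (hS : IsCompact S) (hSc : Convex ℝ S) {s₁ : E}
    (hs₁ : s₁ ∈ S) (s₂ : E) {z : (E × ℝ) × ℝ} (hz : z ∈ coneSet (coneSet S s₁) (s₂, 0)) :
    ∃ l ∈ Icc (0:ℝ) 1, ∃ b ∈ Icc (0:ℝ) 1, ∃ w ∈ S,
      z = l • (b • ((w, 0), 0) + (1 - b) • ((s₁, 1), 0)) + (1 - l) • ((s₂, 0), 1) := by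
  have hne : S.Nonempty := ⟨s₁, hs₁⟩
  rw [coneSet_eq_image (isCompact_coneSet hS hSc hne s₁) (convex_coneSet S s₁)
    ⟨_, apex_mem_coneSet S s₁⟩] at hz
  obtain ⟨⟨l, _⟩, ⟨hl, c, hc, rfl⟩, rfl⟩ := hz
  rw [coneSet_eq_image hS hSc hne] at hc
  obtain ⟨⟨b, _⟩, ⟨hb, w, hw, rfl⟩, rfl⟩ := hc
  refine ⟨l, hl, b, hb, w, hw, ?_⟩
  ext <;> simp

end Cone

theorem stmt_10_general {E : Type*}
    [AddCommGroup E] [Module ℝ E] [TopologicalSpace E] [IsTopologicalAddGroup E]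
    [ContinuousSMul ℝ E] [T2Space E]
    (S : Set E) (hS : IsCompact S) (hSc : Convex ℝ S)
    (s₁ s₂ : E) (hs₁ : s₁ ∈ S)
    (x : E) (α : ℝ) (hα : α ∈ Set.Ioo (0:ℝ) 1)
    (y : E × ℝ)
    (hyrep : y = α • ((x, (0:ℝ)) : E × ℝ) + (1 - α) • ((s₁, (1:ℝ)) : E × ℝ))
    (y' : (E × ℝ) × ℝ) (hy' : y' ∈ coneSet (coneSet S s₁) (s₂, 0))
    (hproj : y'.1 = y) :
    ∃! x' : (E × ℝ) × ℝ,
      x' ∈ closure (convexHull ℝ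
          (((fun z => ((z, (0:ℝ)), (0:ℝ))) '' S) ∪ {((s₂, (0:ℝ)), (1:ℝ))})) ∧
      y' = α • x' + (1 - α) • (((s₁, (1:ℝ)), (0:ℝ)) : (E × ℝ) × ℝ) := by
  obtain ⟨hα0, -⟩ := hα
  obtain ⟨l, hl, b, hb, w, hw, rfl⟩ := exists_eq_of_mem_coneSet_coneSet hS hSc hs₁ s₂ hy'
  have hheight : l * (1 - b) = 1 - α := by
    have := congrArg Prod.snd (hproj.trans hyrep)
    simp only [Prod.smul_mk, smul_eq_mul, mul_zero, mul_one, Prod.mk_add_mk, zero_add, add_zero,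
      smul_add] at this
    linarith
  set μ := l * b / α
  have hμ : μ ∈ Icc (0:ℝ) 1 :=
    ⟨div_nonneg (mul_nonneg hl.1 hb.1) hα0.le, by rw [div_le_one hα0]; linarith [hl.2]⟩
  have hseg : μ • ((w, 0), 0) + (1 - μ) • ((s₂, 0), 1) ∈
      segment ℝ (((w, 0), 0) : (E × ℝ) × ℝ) ((s₂, 0), 1) :=
    ⟨μ, 1 - μ, hμ.1, by linarith [hμ.2], by ring, rfl⟩
  have hrep := smul_add_smul_add_smul_eq_smul_add_smul hα0.ne' hheight
    (((w, 0), 0) : (E × ℝ) × ℝ) ((s₁, 1), 0) ((s₂, 0), 1)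
  refine ⟨_, ⟨?_, hrep⟩, ?_⟩
  · refine subset_closure (segment_subset_convexHull ?_ ?_ hseg)
    exacts [Or.inl ⟨w, hw, rfl⟩, Or.inr rfl]
  · rintro z ⟨-, hz⟩
    exact smul_right_injective _ hα0.ne' (add_right_cancel (hz.symm.trans hrep))

/-- In the double cone `T = cone(cone(S,s₁),s₂)`, with projection
`π = Prod.fst : T → cone(S,s₁)`: if `y = α x + (1-α) c(s₁)` with `x ∈ S`,
`0 < α < 1`, then every `y' ∈ T` with `π(y') = y` has a unique representation
`y' = α x' + (1-α) c(s₁)` with `x'` in the subcone `cone(S,s₂)`. -/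
theorem stmt_10 {E : Type*}
    [AddCommGroup E] [Module ℝ E] [TopologicalSpace E] [IsTopologicalAddGroup E]
    [ContinuousSMul ℝ E] [LocallyConvexSpace ℝ E] [T2Space E]
    (S : Set E) (hS : IsCompact S) (hSc : Convex ℝ S)
    (s₁ s₂ : E) (hs₁ : s₁ ∈ S) (hs₂ : s₂ ∈ S)
    (x : E) (hx : x ∈ S) (α : ℝ) (hα : α ∈ Set.Ioo (0:ℝ) 1)
    (y : E × ℝ) (hy : y ∈ coneSet S s₁)
    (hyrep : y = α • ((x, (0:ℝ)) : E × ℝ) + (1 - α) • ((s₁, (1:ℝ)) : E × ℝ))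
    (y' : (E × ℝ) × ℝ) (hy' : y' ∈ coneSet (coneSet S s₁) (s₂, 0))
    (hproj : y'.1 = y) :
    ∃! x' : (E × ℝ) × ℝ,
      x' ∈ closure (convexHull ℝ
          (((fun z => ((z, (0:ℝ)), (0:ℝ))) '' S) ∪ {((s₂, (0:ℝ)), (1:ℝ))})) ∧
      y' = α • x' + (1 - α) • (((s₁, (1:ℝ)), (0:ℝ)) : (E × ℝ) × ℝ) :=
  stmt_10_general S hS hSc s₁ s₂ hs₁ x α hα y hyrep y' hy' hproj
end

section
/- Let $d$ be the metric on the Urysohn sphere $\mathbb{U}_1$, let $D \subseteq \mathbb{U}_1$ be a countable dense set, and let $x_1,\ldots,x_n \in \mathbb{U}_1$. Then there exist $d_1,\ldots,d_n \in D$ such that the $n \times n$ matrix with entries $d(x_i,d_j)$ is invertible. -/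
/-!
Take `ε ≤ 1/2` below every distance `d(xᵢ, xⱼ)`, `i ≠ j`. For each `j` the function
`xᵢ ↦ 1/2 + ε [i = j]` is Katětov, so it is `d(·, yⱼ)` for some `yⱼ`, and the matrix
`(d(xᵢ, yⱼ)) = ½ J + ε I` is positive definite. Nonvanishing of the determinant is an open
condition on `(y₁, …, yₙ)` and `Dⁿ` is dense, so the `yⱼ` can be moved into `D`.
-/

open Filter Topology

theorem Matrix.posDef_of_const_add_smul_one {ι : Type*} [Fintype ι] [DecidableEq ι]
    {a b : ℝ} (ha : 0 ≤ a) (hb : 0 < b) : (Matrix.of (fun _ _ : ι => a) + b • 1).PosDef := by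
  have hJ : Matrix.of (fun _ _ : ι => a) = a • vecMulVec (fun _ => 1) (star fun _ => 1) := by
    ext; simp [vecMulVec]
  rw [hJ]
  exact PosDef.posSemidef_add ((posSemidef_vecMulVec_self_star _).smul ha) (PosDef.one.smul hb)

theorem exists_pi_mem_det_ne_zero_of_dense {X ι : Type*} [TopologicalSpace X] [Fintype ι]
    [DecidableEq ι] {D : Set X} (hD : Dense D) {M : (ι → X) → Matrix ι ι ℝ}
    (hM : Continuous M) (h : ∃ y, (M y).det ≠ 0) :
    ∃ d : ι → X, (∀ j, d j ∈ D) ∧ (M d).det ≠ 0 := by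
  have hopen : IsOpen {d | (M d).det ≠ 0} := isOpen_ne.preimage hM.matrix_det
  obtain ⟨d, hdet, hd⟩ := (dense_pi Set.univ fun _ _ => hD).inter_open_nonempty _ hopen h
  exact ⟨d, fun j => hd j (Set.mem_univ j), hdet⟩

theorem Function.Injective.eventually_le_dist {ι X : Type*} [Finite ι] [MetricSpace X]
    {x : ι → X} (hx : Function.Injective x) :
    ∀ᶠ ε in 𝓝[>] (0 : ℝ), ∀ i j, i ≠ j → ε ≤ dist (x i) (x j) := by
  simp only [eventually_all]
  intro i j hij
  exact nhdsWithin_le_nhds (eventually_le_nhds (dist_pos.2 (hx.ne hij)))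

section Katetov

variable {ι X : Type*} [PseudoMetricSpace X]

def IsKatetov (p : ι → X) (f : ι → ℝ) : Prop :=
  (∀ i j, |f i - f j| ≤ dist (p i) (p j)) ∧ ∀ i j, dist (p i) (p j) ≤ f i + f j

theorem isKatetov_const_add_ite [DecidableEq ι] {p : ι → X} {c ε : ℝ}
    (hdiam : ∀ i j, dist (p i) (p j) ≤ 2 * c) (hε : 0 ≤ ε)
    (hsep : ∀ i j, i ≠ j → ε ≤ dist (p i) (p j)) (j : ι) :
    IsKatetov p (fun i => c + if i = j then ε else 0) := by
  have hite : ∀ i, 0 ≤ (if i = j then ε else 0) ∧ (if i = j then ε else 0) ≤ ε :=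
    fun i => by split_ifs <;> simp [hε]
  refine ⟨fun i k => ?_, fun i k => ?_⟩
  · rcases eq_or_ne i k with rfl | hik
    · simp
    · rw [add_sub_add_left_eq_sub]
      exact (abs_sub_le_of_nonneg_of_le (hite i).1 (hite i).2 (hite k).1 (hite k).2).trans
        (hsep i k hik)
  · linarith [hdiam i k, (hite i).1, (hite k).1]

end Katetov

theorem stmt_14_general {X : Type*} [MetricSpace X]
    (hbound : ∀ x y : X, dist x y ≤ 1)
    (hkatetov : ∀ (k : ℕ) (p : Fin k → X) (f : Fin k → ℝ),
      (∀ i, f i ∈ Set.Icc (0:ℝ) 1) →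
      (∀ i j, |f i - f j| ≤ dist (p i) (p j)) →
      (∀ i j, dist (p i) (p j) ≤ f i + f j) →
      ∃ y : X, ∀ i, dist y (p i) = f i)
    (D : Set X) (hDdense : Dense D)
    (n : ℕ) (x : Fin n → X) (hx : Function.Injective x) :
    ∃ d : Fin n → X, (∀ j, d j ∈ D) ∧
      (Matrix.of (fun i j : Fin n => dist (x i) (d j))).det ≠ 0 := by
  have hsmall : ∀ᶠ ε in 𝓝[>] (0 : ℝ), ε ≤ 1 / 2 :=
    nhdsWithin_le_nhds (eventually_le_nhds (by norm_num))
  obtain ⟨ε, ⟨hsep, hε_le⟩, hε_pos⟩ :=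
    ((hx.eventually_le_dist.and hsmall).and self_mem_nhdsWithin).exists
  have hy : ∀ j, ∃ y : X, ∀ i, dist y (x i) = 1 / 2 + if i = j then ε else 0 := fun j => by
    have hdiam : ∀ i k, dist (x i) (x k) ≤ 2 * (1 / 2) := fun i k => by
      linarith [hbound (x i) (x k)]
    obtain ⟨hlip, htri⟩ := isKatetov_const_add_ite hdiam hε_pos.le hsep j
    refine hkatetov n x _ (fun i => ⟨?_, ?_⟩) hlip htri <;> split_ifs <;> linarith
  choose y hy using hy
  refine exists_pi_mem_det_ne_zero_of_dense hDdense
    (continuous_matrix fun i j => continuous_const.dist (continuous_apply j)) ⟨y, ?_⟩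
  have hM : Matrix.of (fun i j => dist (x i) (y j)) = Matrix.of (fun _ _ => 1 / 2) + ε • 1 := by
    ext i j
    simp [dist_comm (x i), hy, Matrix.one_apply]
  rw [hM]
  exact ((Matrix.posDef_of_const_add_smul_one (by norm_num) hε_pos).det_pos).ne'

/-- The Urysohn sphere (abstractly: a metric space of diameter at most 1 in which
every Katětov function with values in `[0,1]` defined on a finite subset is
realized as a distance function): for every countable dense `D` and distinct
points `x₁, …, xₙ` there are `d₁, …, dₙ ∈ D` with the matrix `(d(xᵢ,dⱼ))`
invertible. -/
theorem stmt_14 {X : Type*} [MetricSpace X]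
    (hbound : ∀ x y : X, dist x y ≤ 1)
    (hkatetov : ∀ (k : ℕ) (p : Fin k → X) (f : Fin k → ℝ),
      (∀ i, f i ∈ Set.Icc (0:ℝ) 1) →
      (∀ i j, |f i - f j| ≤ dist (p i) (p j)) →
      (∀ i j, dist (p i) (p j) ≤ f i + f j) →
      ∃ y : X, ∀ i, dist y (p i) = f i)
    (D : Set X) (hDdense : Dense D) (hDcount : D.Countable)
    (n : ℕ) (x : Fin n → X) (hx : Function.Injective x) :
    ∃ d : Fin n → X, (∀ j, d j ∈ D) ∧
      (Matrix.of (fun i j : Fin n => dist (x i) (d j))).det ≠ 0 :=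
  stmt_14_general hbound hkatetov D hDdense n x hx
end
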